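/- For every a ∈ ℝ^N, gauge_{A^r−c}(g(a)−c) = gauge_{A−c}(a−c); in particular, g maps A into A^r, so the ray mask always outputs an action in the relevant action set. -/

import Mathlib

/-! Write `s = Aʳ - c`, `t = A - c` and `x = a - c`. The gauge is positively homogeneous, so
rescaling `x` by `gauge t x / gauge s x` turns its `s`-gauge into its `t`-gauge; the division is
harmless because `s` is a bounded neighbourhood of `0`, so `gauge s x > 0` for `x ≠ 0`. As `s` is
also closed and convex, its gauge is `≤ 1` exactly on `s`, while points of `t` have `t`-gauge
`≤ 1`; hence `g` maps `A` into `Aʳ`. -/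

open Set Classical

/-- The ray mapping `g` from the action space `A` to the relevant action set `Aʳ`:
`g(c) = c`, and for `a ≠ c`,
`g(a) = c + (gauge_{A−c}(a−c) / gauge_{Aʳ−c}(a−c)) • (a−c)`. -/
noncomputable def rayMap {N : ℕ} (A Ar : Set (EuclideanSpace ℝ (Fin N)))
    (c : EuclideanSpace ℝ (Fin N)) (a : EuclideanSpace ℝ (Fin N)) :
    EuclideanSpace ℝ (Fin N) :=
  if a = c then c
  else c + (gauge ((· - c) '' A) (a - c) / gauge ((· - c) '' Ar) (a - c)) • (a - c)

open Filter Topology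

theorem gauge_smul_div_gauge {E : Type*} [AddCommGroup E] [Module ℝ E] {s t : Set E} {x : E}
    (hx : gauge s x ≠ 0) : gauge s ((gauge t x / gauge s x) • x) = gauge t x := by
  rw [gauge_smul_of_nonneg (div_nonneg (gauge_nonneg _) (gauge_nonneg _)), smul_eq_mul,
    div_mul_cancel₀ _ hx]

theorem image_sub_const_mem_nhds_zero {G : Type*} [AddGroup G] [TopologicalSpace G]
    [IsTopologicalAddGroup G] {s : Set G} {c : G} (hs : s ∈ 𝓝 c) : (· - c) '' s ∈ 𝓝 (0 : G) := by
  simpa using (Homeomorph.subRight c).isOpenMap.image_mem_nhds hs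

section Translate

variable {E : Type*} [NormedAddCommGroup E] [NormedSpace ℝ E] {s : Set E} {c : E}

theorem gauge_image_sub_const_pos (hb : Bornology.IsBounded s) (hs : s ∈ 𝓝 c) {x : E}
    (hx : x ≠ 0) : 0 < gauge ((· - c) '' s) x := by
  have hbounded : Bornology.IsBounded ((· - c) '' s) :=
    (IsometryEquiv.subRight c).isometry.lipschitz.isBounded_image hb
  exact (gauge_pos (absorbent_nhds_zero (image_sub_const_mem_nhds_zero hs))
    ((NormedSpace.isVonNBounded_iff ℝ).2 hbounded)).2 hx

theorem mem_of_gauge_image_sub_const_le_one (hconv : Convex ℝ s) (hclosed : IsClosed s)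
    (hs : s ∈ 𝓝 c) {y : E} (hy : gauge ((· - c) '' s) (y - c) ≤ 1) : y ∈ s := by
  have hconv' : Convex ℝ ((· - c) '' s) := by
    simpa only [sub_eq_neg_add] using hconv.translate (-c)
  have hclosed' : IsClosed ((· - c) '' s) := (Homeomorph.subRight c).isClosedMap s hclosed
  rw [gauge_le_one_iff_mem_closure hconv' (image_sub_const_mem_nhds_zero hs),
    hclosed'.closure_eq] at hy
  simpa using hy

end Translate

section RayMap

variable {N : ℕ} {A Ar : Set (EuclideanSpace ℝ (Fin N))} {c : EuclideanSpace ℝ (Fin N)}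

theorem gauge_rayMap_sub (hb : Bornology.IsBounded Ar) (hc : Ar ∈ 𝓝 c)
    (a : EuclideanSpace ℝ (Fin N)) :
    gauge ((· - c) '' Ar) (rayMap A Ar c a - c) = gauge ((· - c) '' A) (a - c) := by
  unfold rayMap
  split_ifs with ha
  · simp [ha]
  · rw [add_sub_cancel_left,
      gauge_smul_div_gauge (gauge_image_sub_const_pos hb hc (sub_ne_zero.2 ha)).ne']

theorem rayMap_mem (hconv : Convex ℝ Ar) (hclosed : IsClosed Ar) (hb : Bornology.IsBounded Ar)
    (hc : Ar ∈ 𝓝 c) {a : EuclideanSpace ℝ (Fin N)} (ha : a ∈ A) : rayMap A Ar c a ∈ Ar :=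
  mem_of_gauge_image_sub_const_le_one hconv hclosed hc <|
    (gauge_rayMap_sub hb hc a).trans_le (gauge_le_one_of_mem ⟨a, ha, rfl⟩)

end RayMap

theorem rayMap_gauge_eq_general {N : ℕ}
    (A Ar : Set (EuclideanSpace ℝ (Fin N)))
    (hArcomp : IsCompact Ar) (hArconv : Convex ℝ Ar)
    (c : EuclideanSpace ℝ (Fin N)) (hc : c ∈ interior Ar) :
    (∀ a : EuclideanSpace ℝ (Fin N),
        gauge ((· - c) '' Ar) (rayMap A Ar c a - c) = gauge ((· - c) '' A) (a - c)) ∧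
      (∀ a ∈ A, rayMap A Ar c a ∈ Ar) := by
  have hnhds : Ar ∈ 𝓝 c := mem_interior_iff_mem_nhds.1 hc
  exact ⟨gauge_rayMap_sub hArcomp.isBounded hnhds,
    fun _ ha => rayMap_mem hArconv hArcomp.isClosed hArcomp.isBounded hnhds ha⟩

/-- For every `a ∈ ℝ^N`, `gauge_{Aʳ−c}(g(a)−c) = gauge_{A−c}(a−c)`;
in particular, `g` maps `A` into `Aʳ`. -/
theorem rayMap_gauge_eq {N : ℕ} (hN : 1 ≤ N)
    (A Ar : Set (EuclideanSpace ℝ (Fin N)))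
    (hAcomp : IsCompact A) (hAconv : Convex ℝ A)
    (hArcomp : IsCompact Ar) (hArconv : Convex ℝ Ar)
    (hsub : Ar ⊆ A) (c : EuclideanSpace ℝ (Fin N)) (hc : c ∈ interior Ar) :
    (∀ a : EuclideanSpace ℝ (Fin N),
        gauge ((· - c) '' Ar) (rayMap A Ar c a - c) = gauge ((· - c) '' A) (a - c)) ∧
      (∀ a ∈ A, rayMap A Ar c a ∈ Ar) :=
  rayMap_gauge_eq_general A Ar hArcomp hArconv c hc
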